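/- arXiv:1105.3793 — 3 statements merged into one kernel-verified Lean document; each statement's English description precedes it below -/
import Mathlib

section
/- Let q be a prime power, n ≥ 1, and f : F_q^n → F_q^n an arbitrary function. For k ∈ F_q^n define g_k(x) := f(x) + (k_1 x_1, ..., k_n x_n). If A is uniform on F_q^n, then the average over k ∈ F_q^n of the Rényi entropy H_2(g_k(A)) is at least log_2(q^n) - n·log_2(2 - 1/q). -/
open Finset

/-- Probability mass of value `y` under the pushforward of the uniform
distribution on `α` along `g`. -/
noncomputable def mass {α β : Type*} [Fintype α] [DecidableEq β]
    (g : α → β) (y : β) : ℝ :=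
  (Finset.univ.filter (fun x => g x = y)).card / (Fintype.card α : ℝ)

/-- Collision probability of `g(A)` for `A` uniform on `α`. -/
noncomputable def collProb {α β : Type*} [Fintype α] [Fintype β] [DecidableEq β]
    (g : α → β) : ℝ :=
  ∑ y, (mass g y) ^ 2

/-- Shannon entropy (base 2) of `g(A)` for `A` uniform on `α`.
(Terms with zero mass contribute `0` since `Real.logb 2 0 = 0`.) -/
noncomputable def shannon {α β : Type*} [Fintype α] [Fintype β] [DecidableEq β]
    (g : α → β) : ℝ :=
  -∑ y, mass g y * Real.logb 2 (mass g y)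

/-- Rényi entropy (base 2) of `g(A)` for `A` uniform on `α`. -/
noncomputable def renyi2 {α β : Type*} [Fintype α] [Fintype β] [DecidableEq β]
    (g : α → β) : ℝ :=
  -Real.logb 2 (collProb g)

/-! The collision probability of `g(A)` is the fraction of pairs `(x, y)` with `g x = g y`.
Summed over all keys `k`, a pair `(x, y)` collides under `g_k` for at most `q` values of `k i`
at each coordinate where `x i = y i`, and for at most one value where `x i ≠ y i`; summing these
weights over all pairs gives `(q (2q - 1))^n` collisions in total, i.e. average collision
probability at most `(2 - 1/q)^n / q^n`. Jensen's inequality for the concave `logb 2` turns this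
into the bound on the average Rényi entropy. -/

lemma Real.concaveOn_logb {b : ℝ} (hb : 1 ≤ b) : ConcaveOn ℝ (Set.Ioi 0) (Real.logb b) := by
  have hlog : Real.logb b = fun x => (Real.log b)⁻¹ • Real.log x := by
    ext x
    simp [Real.logb, div_eq_inv_mul]
  rw [hlog]
  exact strictConcaveOn_log_Ioi.concaveOn.smul (inv_nonneg.2 (Real.log_nonneg hb))

section Collision

variable {α β : Type*} [Fintype α] [Fintype β] [DecidableEq β]

lemma card_collisions_eq_sum_sq (g : α → β) :
    #{p : α × α | g p.1 = g p.2} = ∑ y, #{x | g x = y} ^ 2 := by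
  rw [card_eq_sum_card_fiberwise (f := fun p : α × α => g p.1) (t := univ)
    (fun _ _ => mem_univ _)]
  refine sum_congr rfl fun y _ => ?_
  rw [filter_filter]
  have hfiber : ({p : α × α | g p.1 = g p.2 ∧ g p.1 = y} : Finset (α × α))
      = ({x | g x = y} : Finset α) ×ˢ ({x | g x = y} : Finset α) := by
    ext p
    simp only [mem_filter, mem_univ, true_and, mem_product]
    constructor
    · rintro ⟨h12, h1⟩
      exact ⟨h1, h12 ▸ h1⟩
    · rintro ⟨h1, h2⟩
      exact ⟨h1.trans h2.symm, h1⟩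
  rw [hfiber, card_product, sq]

lemma collProb_eq_card_collisions_div (g : α → β) :
    collProb g = #{p : α × α | g p.1 = g p.2} / (Fintype.card α : ℝ) ^ 2 := by
  rw [card_collisions_eq_sum_sq, collProb]
  push_cast
  rw [sum_div]
  simp only [mass, div_pow]

lemma collProb_pos [Nonempty α] (g : α → β) : 0 < collProb g := by
  obtain ⟨a⟩ := ‹Nonempty α›
  have hmass : 0 < mass g (g a) := by
    unfold mass
    have hcard : 0 < #{x | g x = g a} := card_pos.2 ⟨a, by simp⟩
    positivity
  exact sum_pos' (fun y _ => sq_nonneg _) ⟨g a, mem_univ _, by positivity⟩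

lemma neg_logb_le_avg_renyi2 {κ : Type*} [Fintype κ] [Nonempty κ] [Nonempty α]
    (g : κ → α → β) {B : ℝ} (hB : (∑ k, collProb (g k)) / Fintype.card κ ≤ B) :
    -Real.logb 2 B ≤ (∑ k, renyi2 (g k)) / Fintype.card κ := by
  set w : ℝ := (Fintype.card κ : ℝ)⁻¹
  have hw : 0 < w := by positivity
  have hw_sum : ∑ _k : κ, w = 1 := by
    simp [w, card_univ]
  have jensen : ∑ k, w • Real.logb 2 (collProb (g k)) ≤
      Real.logb 2 (∑ k, w • collProb (g k)) :=
    (Real.concaveOn_logb one_le_two).le_map_sum (fun _ _ => hw.le) hw_sum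
      (fun k _ => collProb_pos (g k))
  have havg_pos : 0 < ∑ k, w • collProb (g k) :=
    sum_pos (fun k _ => mul_pos hw (collProb_pos (g k))) univ_nonempty
  have havg : ∑ k, w • collProb (g k) = (∑ k, collProb (g k)) / Fintype.card κ := by
    simp only [smul_eq_mul, w, inv_mul_eq_div, ← sum_div]
  have hmono : Real.logb 2 (∑ k, w • collProb (g k)) ≤ Real.logb 2 B :=
    Real.logb_le_logb_of_le one_lt_two havg_pos (havg ▸ hB)
  have hrenyi : (∑ k, renyi2 (g k)) / Fintype.card κ
      = -∑ k, w • Real.logb 2 (collProb (g k)) := by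
    simp only [renyi2, sum_neg_distrib, smul_eq_mul, w, inv_mul_eq_div, ← sum_div, neg_div]
  linarith

end Collision

section LinearKeys

variable {ι F : Type*} [Fintype ι] [DecidableEq ι] [Field F] [Fintype F] [DecidableEq F]

def keyedMap (f : (ι → F) → ι → F) (k : ι → F) : (ι → F) → ι → F :=
  fun x i => f x i + k i * x i

lemma card_filter_add_mul_eq_add_mul_le_one {a b : F} (hab : a ≠ b) (u v : F) :
    #{c : F | u + c * a = v + c * b} ≤ 1 := by
  refine card_le_one.2 fun c hc d hd => ?_
  simp only [mem_filter, mem_univ, true_and] at hc hd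
  have hcd : c * (a - b) = d * (a - b) := by linear_combination hc - hd
  exact mul_right_cancel₀ (sub_ne_zero.2 hab) hcd

lemma card_filter_forall_add_mul_eq_le_prod (x y u v : ι → F) :
    (#{k : ι → F | ∀ i, u i + k i * x i = v i + k i * y i} : ℝ)
      ≤ ∏ i, if x i = y i then (Fintype.card F : ℝ) else 1 := by
  have hpi : ({k : ι → F | ∀ i, u i + k i * x i = v i + k i * y i} : Finset (ι → F))
      = Fintype.piFinset fun i => {c : F | u i + c * x i = v i + c * y i} := by
    ext k
    simp
  rw [hpi, Fintype.card_piFinset, Nat.cast_prod]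
  refine prod_le_prod (fun _ _ => Nat.cast_nonneg _) fun i _ => ?_
  split_ifs with hxy
  · exact_mod_cast card_le_univ _
  · exact_mod_cast card_filter_add_mul_eq_add_mul_le_one hxy (u i) (v i)

omit [Field F] [DecidableEq F] in
lemma sum_prod_pairs_eq_pow {R : Type*} [CommSemiring R] (w : F → F → R) :
    ∑ p : (ι → F) × (ι → F), ∏ i, w (p.1 i) (p.2 i) = (∑ a, ∑ b, w a b) ^ Fintype.card ι := by
  rw [← Fintype.sum_prod_type', ← card_univ, ← prod_const, Fintype.prod_sum]
  exact Fintype.sum_equiv (Equiv.arrowProdEquivProdArrow ι (fun _ => F) (fun _ => F)).symm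
    _ _ fun _ => rfl

omit [Field F] in
lemma sum_sum_ite_eq_card (a : F) :
    ∑ b : F, (if a = b then (Fintype.card F : ℝ) else 1) = 2 * Fintype.card F - 1 := by
  have hsplit : ∀ b : F, (if a = b then (Fintype.card F : ℝ) else 1)
      = 1 + if a = b then (Fintype.card F : ℝ) - 1 else 0 := by
    intro b
    split_ifs <;> ring
  simp only [hsplit, sum_add_distrib, sum_ite_eq, mem_univ, if_true, sum_const, card_univ,
    nsmul_eq_mul, mul_one]
  ring

lemma sum_card_collisions_le (f : (ι → F) → ι → F) :
    ∑ k : ι → F, (#{p : (ι → F) × (ι → F) | keyedMap f k p.1 = keyedMap f k p.2} : ℝ)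
      ≤ (Fintype.card F * (2 * Fintype.card F - 1)) ^ Fintype.card ι := by
  have hswap : ∑ k : ι → F, #{p : (ι → F) × (ι → F) |
        ∀ i, f p.1 i + k i * p.1 i = f p.2 i + k i * p.2 i}
      = ∑ p : (ι → F) × (ι → F), #{k : ι → F |
        ∀ i, f p.1 i + k i * p.1 i = f p.2 i + k i * p.2 i} := by
    simp only [card_filter]
    exact sum_comm
  simp only [keyedMap, funext_iff]
  calc _ = ∑ p : (ι → F) × (ι → F), (#{k : ι → F |
          ∀ i, f p.1 i + k i * p.1 i = f p.2 i + k i * p.2 i} : ℝ) := by exact_mod_cast hswap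
    _ ≤ ∑ p : (ι → F) × (ι → F), ∏ i, if p.1 i = p.2 i then (Fintype.card F : ℝ) else 1 :=
        sum_le_sum fun p _ => card_filter_forall_add_mul_eq_le_prod _ _ _ _
    _ = _ := by
        rw [sum_prod_pairs_eq_pow fun a b => if a = b then (Fintype.card F : ℝ) else 1]
        simp only [sum_sum_ite_eq_card, sum_const, card_univ, nsmul_eq_mul]

lemma sum_collProb_le (f : (ι → F) → ι → F) :
    ∑ k : ι → F, collProb (keyedMap f k) ≤ (2 - 1 / (Fintype.card F : ℝ)) ^ Fintype.card ι := by
  have hq : (0 : ℝ) < Fintype.card F := by exact_mod_cast Fintype.card_pos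
  simp only [collProb_eq_card_collisions_div, ← sum_div, Fintype.card_fun, Nat.cast_pow]
  calc _ ≤ (Fintype.card F * (2 * Fintype.card F - 1) : ℝ) ^ Fintype.card ι
          / (((Fintype.card F : ℝ)) ^ Fintype.card ι) ^ 2 := by
        gcongr
        exact sum_card_collisions_le f
    _ = _ := by
        rw [← pow_mul, mul_comm (Fintype.card ι) 2, pow_mul, ← div_pow]
        congr 1
        field_simp

end LinearKeys

theorem stmt2_general (q n : ℕ) (F : Type*) [Field F] [Fintype F] [DecidableEq F]
    (hq : Fintype.card F = q) (f : (Fin n → F) → (Fin n → F)) :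
    Real.logb 2 ((q : ℝ) ^ n) - n * Real.logb 2 (2 - 1 / (q : ℝ)) ≤
      (1 / (q : ℝ) ^ n) *
        ∑ k : Fin n → F, renyi2 (fun x i => f x i + k i * x i) := by
  subst hq
  have hq_one : (1 : ℝ) ≤ Fintype.card F := by exact_mod_cast Fintype.card_pos
  have hbase : 0 < 2 - 1 / (Fintype.card F : ℝ) := by
    have : 1 / (Fintype.card F : ℝ) ≤ 1 := div_le_one_of_le₀ hq_one (by positivity)
    linarith
  have hcard : (Fintype.card (Fin n → F) : ℝ) = (Fintype.card F : ℝ) ^ n := by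
    simp
  have havg : (∑ k, collProb (keyedMap f k)) / Fintype.card (Fin n → F)
      ≤ (2 - 1 / (Fintype.card F : ℝ)) ^ n / (Fintype.card F : ℝ) ^ n := by
    rw [hcard]
    gcongr
    simpa using sum_collProb_le f
  have h := neg_logb_le_avg_renyi2 (keyedMap f) havg
  rw [hcard, Real.logb_div (by positivity) (by positivity), Real.logb_pow] at h
  unfold keyedMap at h
  rw [one_div_mul_eq_div]
  linarith

theorem stmt2 (q n : ℕ) (hn : 1 ≤ n) (F : Type*) [Field F] [Fintype F] [DecidableEq F]
    (hq : Fintype.card F = q) (f : (Fin n → F) → (Fin n → F)) :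
    Real.logb 2 ((q : ℝ) ^ n) - n * Real.logb 2 (2 - 1 / (q : ℝ)) ≤
      (1 / (q : ℝ) ^ n) *
        ∑ k : Fin n → F, renyi2 (fun x i => f x i + k i * x i) :=
  stmt2_general q n F hq f
end

section
/- Let q be a prime power, n ≥ 1, f(x) := (x_1^2, ..., x_n^2), g_k(x) := f(x) + (k_1 x_1, ..., k_n x_n), and A uniform on F_q^n. Then (1/q^n) Σ_{k ∈ F_q^n} H(g_k(A)) = log_2(q^n) - n(1 - 1/q). -/
open Finset

/-!
For `A` uniform on a finite set, `H(g(A)) = log₂ |dom| - E[log₂ |g⁻¹(g(A))|]`. The fibre of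
`g_k` through `x` is the product of the sets `{x i, -x i - k i}` (the two roots of a monic
quadratic), so `log₂` of its size counts the coordinates with `k i ≠ -2 x i`. Averaged over
`k`, each coordinate avoids this single bad value with probability `1 - 1/q`.
-/

theorem shannon_eq_logb_card_sub {α β : Type*} [Fintype α] [Fintype β] [DecidableEq β]
    [Nonempty α] (g : α → β) :
    shannon g = Real.logb 2 (Fintype.card α) -
      (Fintype.card α : ℝ)⁻¹ * ∑ x, Real.logb 2 #{x' | g x' = g x} := by
  set N : ℝ := (Fintype.card α : ℝ)
  set c : β → ℝ := fun y => (#{x | g x = y} : ℕ)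
  have hN : N ≠ 0 := by positivity
  have sum_c : ∑ y, c y = N := by
    rw [← Nat.cast_sum, ← card_eq_sum_card_fiberwise fun x _ => mem_univ (g x), card_univ]
  have sum_fibers : ∑ x, Real.logb 2 #{x' | g x' = g x} = ∑ y, c y * Real.logb 2 (c y) := by
    rw [← sum_fiberwise univ g]
    refine sum_congr rfl fun y _ => ?_
    rw [sum_congr rfl fun x hx => by rw [(mem_filter.mp hx).2], sum_const, nsmul_eq_mul]
  have term : ∀ y, mass g y * Real.logb 2 (mass g y) =
      N⁻¹ * (c y * Real.logb 2 (c y)) - c y / N * Real.logb 2 N := by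
    intro y
    change c y / N * Real.logb 2 (c y / N) = _
    rcases eq_or_ne (c y) 0 with hc | hc
    · simp [hc]
    · rw [Real.logb_div hc hN]
      ring
  rw [shannon, sum_congr rfl fun y _ => term y, sum_sub_distrib, ← mul_sum, ← sum_mul,
    ← sum_div, sum_c, div_self hN, sum_fibers]
  ring

section Counting

variable {ι R : Type*} [Fintype ι] [DecidableEq ι] [Fintype R] [DecidableEq R]

theorem card_filter_apply_ne (i : ι) (a : R) :
    (#{k : ι → R | k i ≠ a} : ℝ) =
      (Fintype.card R : ℝ) ^ Fintype.card ι * (1 - 1 / Fintype.card R) := by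
  have hq : (Fintype.card R : ℝ) ≠ 0 := by
    have : Nonempty R := ⟨a⟩
    positivity
  obtain ⟨m, hm⟩ := Nat.exists_eq_succ_of_ne_zero (Fintype.card_pos_iff.mpr ⟨i⟩).ne'
  have card_eq : #{k : ι → R | k i = a} = Fintype.card R ^ m := by
    rw [← Fintype.piFinset_univ, Fintype.card_filter_piFinset_const_eq_of_mem _ _ (mem_univ a),
      card_univ, hm, Nat.succ_sub_one]
  have card_add := card_filter_add_card_filter_not (s := univ) fun k : ι → R => k i = a
  rw [card_eq, card_univ, Fintype.card_fun, hm] at card_add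
  have card_ne : (#{k : ι → R | k i ≠ a} : ℝ) = (Fintype.card R : ℝ) ^ (m + 1) -
      (Fintype.card R : ℝ) ^ m := by
    rw [eq_sub_iff_add_eq']
    exact_mod_cast card_add
  rw [hm, card_ne]
  field_simp
  ring

theorem sum_card_filter_apply_ne (c : ι → R) :
    ∑ k : ι → R, (#{i | k i ≠ c i} : ℝ) =
      Fintype.card ι * ((Fintype.card R : ℝ) ^ Fintype.card ι * (1 - 1 / Fintype.card R)) := by
  calc ∑ k : ι → R, (#{i | k i ≠ c i} : ℝ)
      = ∑ k : ι → R, ∑ i, if k i ≠ c i then (1 : ℝ) else 0 := by simp [card_filter]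
    _ = ∑ i, ∑ k : ι → R, if k i ≠ c i then (1 : ℝ) else 0 := sum_comm
    _ = ∑ i, (#{k : ι → R | k i ≠ c i} : ℝ) := by simp [card_filter]
    _ = _ := by simp only [card_filter_apply_ne, sum_const, card_univ, nsmul_eq_mul]

end Counting

theorem sq_add_mul_eq_sq_add_mul_iff {R : Type*} [CommRing R] [NoZeroDivisors R] (a b c : R) :
    a ^ 2 + c * a = b ^ 2 + c * b ↔ a = b ∨ a = -b - c := by
  have factor : a ^ 2 + c * a - (b ^ 2 + c * b) = (a - b) * (a - (-b - c)) := by ring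
  rw [← sub_eq_zero, factor, mul_eq_zero, sub_eq_zero, sub_eq_zero]

section Quadratic

variable {ι R : Type*} [Fintype ι] [DecidableEq ι] [CommRing R] [NoZeroDivisors R]
  [Fintype R] [DecidableEq R]

theorem card_fiber_sq_add_mul (k x : ι → R) :
    #(univ.filter fun x' : ι → R =>
        (fun i => x' i ^ 2 + k i * x' i) = fun i => x i ^ 2 + k i * x i) =
      2 ^ #{i | k i ≠ -(2 * x i)} := by
  have fiber : univ.filter (fun x' : ι → R => (fun i => x' i ^ 2 + k i * x' i) =
      fun i => x i ^ 2 + k i * x i) = Fintype.piFinset fun i => {x i, -x i - k i} := by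
    ext x'
    simp only [mem_filter, mem_univ, true_and, Fintype.mem_piFinset, mem_insert,
      mem_singleton, funext_iff, sq_add_mul_eq_sq_add_mul_iff]
  have card_pair : ∀ i, #{x i, -x i - k i} = if k i ≠ -(2 * x i) then 2 else 1 := by
    intro i
    split_ifs with h
    · exact card_pair fun h' => h (by linear_combination h')
    · rw [not_not.mp h]
      simp [two_mul]
  rw [fiber, Fintype.card_piFinset, prod_congr rfl fun i _ => card_pair i, prod_ite,
    prod_const, prod_const_one, mul_one]

theorem shannon_sq_add_mul (k : ι → R) :
    shannon (fun x : ι → R => fun i => x i ^ 2 + k i * x i) =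
      Real.logb 2 (Fintype.card (ι → R)) -
        (Fintype.card (ι → R) : ℝ)⁻¹ * ∑ x : ι → R, (#{i | k i ≠ -(2 * x i)} : ℝ) := by
  simp [shannon_eq_logb_card_sub, card_fiber_sq_add_mul, Real.logb_pow]

end Quadratic

theorem stmt16_general (q n : ℕ) (F : Type*) [Field F] [Fintype F] [DecidableEq F]
    (hq : Fintype.card F = q) :
    (1 / (q : ℝ) ^ n) *
        ∑ k : Fin n → F, shannon (fun x : Fin n → F => fun i => x i ^ 2 + k i * x i) =
      Real.logb 2 ((q : ℝ) ^ n) - n * (1 - 1 / (q : ℝ)) := by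
  subst hq
  have hN : (Fintype.card (Fin n → F) : ℝ) = (Fintype.card F : ℝ) ^ n := by
    rw [Fintype.card_fun, Fintype.card_fin, Nat.cast_pow]
  have hN0 : (Fintype.card F : ℝ) ^ n ≠ 0 := by positivity
  simp only [shannon_sq_add_mul, hN, sum_sub_distrib, ← mul_sum, sum_const, card_univ]
  rw [sum_comm]
  simp only [sum_card_filter_apply_ne, sum_const, card_univ, hN, Fintype.card_fin, nsmul_eq_mul]
  field_simp

theorem stmt16 (q n : ℕ) (hn : 1 ≤ n) (F : Type*) [Field F] [Fintype F] [DecidableEq F]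
    (hq : Fintype.card F = q) :
    (1 / (q : ℝ) ^ n) *
        ∑ k : Fin n → F, shannon (fun x : Fin n → F => fun i => x i ^ 2 + k i * x i) =
      Real.logb 2 ((q : ℝ) ^ n) - n * (1 - 1 / (q : ℝ)) :=
  stmt16_general q n F hq
end

section
/- Let q be a power of 2, n ≥ 1, f(x) := (x_1^2, ..., x_n^2), g_k(x) := f(x) + (k_1 x_1, ..., k_n x_n), and A uniform on F_q^n. Then for every k ∈ F_q^n, CP(g_k(A)) = 2^{w(k)}/q^n, where w(k) is the Hamming weight of k; consequently the average Rényi entropy over k equals log_2(q^n) - n(1 - 1/q). -/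
open Finset

/-!
Since `b² + cb - (a² + ca) = (b - a)(b + a + c)`, every nonempty fibre of `a ↦ a² + ca` is
`{a, -a - c}`, which in characteristic 2 is `{a, a + c}`: one point if `c = 0`, two otherwise.
A map whose nonempty fibres all have `d` points has collision probability `d / q`, and collision
probability is multiplicative over coordinates, giving `2^{w(k)} / q^n`. Hence the Rényi entropy
is `log₂ qⁿ - w(k)`, and averaging uses that the expected Hamming weight of a uniform vector is
`n (1 - 1/q)`.
-/

section CollisionProbability

variable {α β : Type*} [Fintype α] [Fintype β] [DecidableEq β]

lemma collProb_eq_of_card_fiber_eq (g : α → β) (d : ℕ)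
    (hd : ∀ x, #{x' | g x' = g x} = d) :
    collProb g = d / Fintype.card α := by
  have hsq : ∀ y, #{x | g x = y} ^ 2 = d * #{x | g x = y} := by
    intro y
    obtain hy | ⟨x, hx⟩ := (univ.filter fun x => g x = y).eq_empty_or_nonempty
    · simp [hy]
    · rw [← (mem_filter.mp hx).2, hd, sq]
  have hsum : ∑ y, #{x | g x = y} ^ 2 = d * Fintype.card α := by
    rw [Finset.sum_congr rfl fun y _ => hsq y, ← Finset.mul_sum,
      ← card_eq_sum_card_fiberwise fun x _ => mem_univ (g x), card_univ]
  have hsumℝ : ∑ y, (#{x | g x = y} : ℝ) ^ 2 = d * Fintype.card α := by exact_mod_cast hsum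
  rcases isEmpty_or_nonempty α with hα | hα
  · simp [collProb, mass]
  · have hcard : (Fintype.card α : ℝ) ≠ 0 := Nat.cast_ne_zero.mpr Fintype.card_ne_zero
    simp only [collProb, mass, div_pow]
    rw [← Finset.sum_div, hsumℝ, sq, mul_div_mul_right _ _ hcard]

end CollisionProbability

section Pi

variable {ι : Type*} [Fintype ι] [DecidableEq ι] {α β : ι → Type*} [∀ i, Fintype (α i)]
  [∀ i, DecidableEq (β i)]

lemma mass_pi (g : ∀ i, α i → β i) (y : ∀ i, β i) :
    mass (fun (x : ∀ i, α i) i => g i (x i)) y = ∏ i, mass (g i) (y i) := by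
  have hfiber : ({x | (fun i => g i (x i)) = y} : Finset (∀ i, α i))
      = Fintype.piFinset fun i => {a | g i a = y i} := by
    ext x
    simp [Fintype.mem_piFinset, funext_iff]
  simp only [mass, hfiber, Fintype.card_piFinset, Fintype.card_pi, Nat.cast_prod,
    Finset.prod_div_distrib]

lemma collProb_pi [∀ i, Fintype (β i)] (g : ∀ i, α i → β i) :
    collProb (fun (x : ∀ i, α i) i => g i (x i)) = ∏ i, collProb (g i) := by
  simp only [collProb, Finset.prod_univ_sum, mass_pi, Finset.prod_pow, Fintype.piFinset_univ]

end Pi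

lemma charP_two_of_card_eq_two_pow {F : Type*} [Field F] [Fintype F] {m : ℕ}
    (hF : Fintype.card F = 2 ^ m) : CharP F 2 := by
  have hm : m ≠ 0 := by
    rintro rfl
    exact Fintype.one_lt_card.ne' hF
  refine ringChar.of_eq ((FiniteField.even_card_iff_char_two).mpr ?_)
  rw [hF, Nat.pow_mod, Nat.mod_self, zero_pow hm, Nat.zero_mod]

section QuadraticFibers

variable {F : Type*} [Field F] [Fintype F] [DecidableEq F]

lemma filter_sq_add_mul_eq (c a : F) :
    ({b | b ^ 2 + c * b = a ^ 2 + c * a} : Finset F) = {a, -a - c} := by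
  ext b
  have hfactor : b ^ 2 + c * b - (a ^ 2 + c * a) = (b - a) * (b - (-a - c)) := by ring
  simp only [mem_filter, mem_univ, true_and, mem_insert, mem_singleton]
  rw [← sub_eq_zero, hfactor, mul_eq_zero, sub_eq_zero, sub_eq_zero]

lemma card_filter_sq_add_mul_eq [CharP F 2] (c a : F) :
    #{b | b ^ 2 + c * b = a ^ 2 + c * a} = if c = 0 then 1 else 2 := by
  rw [filter_sq_add_mul_eq, CharTwo.sub_eq_add, CharTwo.neg_eq]
  split_ifs with hc
  · simp [hc]
  · exact card_pair fun h => hc (left_eq_add.mp h)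

lemma collProb_sq_add_mul [CharP F 2] (c : F) :
    collProb (fun a : F => a ^ 2 + c * a) = (if c = 0 then 1 else 2) / Fintype.card F := by
  rw [collProb_eq_of_card_fiber_eq _ _ (card_filter_sq_add_mul_eq c)]
  push_cast [apply_ite (Nat.cast : ℕ → ℝ)]
  rfl

lemma collProb_pi_sq_add_mul [CharP F 2] {ι : Type*} [Fintype ι] [DecidableEq ι] (k : ι → F) :
    collProb (fun (x : ι → F) i => x i ^ 2 + k i * x i)
      = 2 ^ hammingNorm k / (Fintype.card F : ℝ) ^ Fintype.card ι := by
  rw [collProb_pi (fun i a => a ^ 2 + k i * a)]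
  simp only [collProb_sq_add_mul, Finset.prod_div_distrib, Finset.prod_const, card_univ,
    Finset.prod_ite, one_pow, one_mul, hammingNorm, ne_eq]

end QuadraticFibers

lemma sum_hammingNorm_mul_card {ι β : Type*} [Fintype ι] [DecidableEq ι] [Fintype β] [Zero β]
    [DecidableEq β] :
    ∑ x : ι → β, hammingNorm x * Fintype.card β
      = Fintype.card ι * (Fintype.card β - 1) * Fintype.card β ^ Fintype.card ι := by
  have hcoord : ∀ i : ι, ∑ x : ι → β, (if x i ≠ 0 then 1 else 0)
      = Fintype.card β ^ (Fintype.card ι - 1) * (Fintype.card β - 1) := by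
    intro i
    rw [← Fintype.piFinset_univ, Fintype.sum_piFinset_apply (fun b : β => if b ≠ 0 then 1 else 0),
      Finset.sum_boole, smul_eq_mul, Nat.cast_id, filter_ne', card_erase_of_mem (mem_univ 0),
      card_univ]
  simp only [hammingNorm, card_filter, ← Finset.sum_mul]
  rw [Finset.sum_comm, Finset.sum_congr rfl fun i _ => hcoord i, sum_const, card_univ, smul_eq_mul]
  rcases Nat.eq_zero_or_pos (Fintype.card ι) with h | h
  · simp [h]
  · rw [mul_assoc, mul_right_comm _ (Fintype.card β - 1), ← pow_succ, Nat.sub_add_cancel h]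
    ring

theorem stmt18_general (q m n : ℕ) (hq2 : q = 2 ^ m)
    (F : Type*) [Field F] [Fintype F] [DecidableEq F]
    (hq : Fintype.card F = q) :
    (∀ k : Fin n → F,
        collProb (fun x : Fin n → F => fun i => x i ^ 2 + k i * x i) =
          (2 : ℝ) ^ hammingNorm k / (q : ℝ) ^ n) ∧
      (1 / (q : ℝ) ^ n) *
          ∑ k : Fin n → F, renyi2 (fun x : Fin n → F => fun i => x i ^ 2 + k i * x i) =
        Real.logb 2 ((q : ℝ) ^ n) - n * (1 - 1 / (q : ℝ)) := by
  subst hq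
  have : CharP F 2 := charP_two_of_card_eq_two_pow hq2
  have hcoll (k : Fin n → F) := Fintype.card_fin n ▸ collProb_pi_sq_add_mul k
  refine ⟨hcoll, ?_⟩
  have hcard : (0 : ℝ) < Fintype.card F := Nat.cast_pos.mpr Fintype.card_pos
  have hrenyi (k : Fin n → F) : renyi2 (fun x : Fin n → F => fun i => x i ^ 2 + k i * x i)
      = Real.logb 2 ((Fintype.card F : ℝ) ^ n) - hammingNorm k := by
    rw [renyi2, hcoll, Real.logb_div (by positivity) (by positivity), Real.logb_pow,
      Real.logb_self_eq_one one_lt_two]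
    ring
  have hweight : ∑ k : Fin n → F, (hammingNorm k : ℝ) * Fintype.card F
      = n * (Fintype.card F - 1) * (Fintype.card F : ℝ) ^ n := by
    have := sum_hammingNorm_mul_card (ι := Fin n) (β := F)
    rw [Fintype.card_fin] at this
    have := congrArg (Nat.cast : ℕ → ℝ) this
    push_cast [Nat.cast_sub Fintype.card_pos] at this
    exact this
  simp only [hrenyi, sum_sub_distrib, sum_const, card_univ, Fintype.card_fun, Fintype.card_fin,
    nsmul_eq_mul]
  rw [← Finset.sum_mul] at hweight
  push_cast
  field_simp
  linear_combination -hweight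

theorem stmt18 (q m n : ℕ) (hq2 : q = 2 ^ m) (hn : 1 ≤ n)
    (F : Type*) [Field F] [Fintype F] [DecidableEq F]
    (hq : Fintype.card F = q) :
    (∀ k : Fin n → F,
        collProb (fun x : Fin n → F => fun i => x i ^ 2 + k i * x i) =
          (2 : ℝ) ^ hammingNorm k / (q : ℝ) ^ n) ∧
      (1 / (q : ℝ) ^ n) *
          ∑ k : Fin n → F, renyi2 (fun x : Fin n → F => fun i => x i ^ 2 + k i * x i) =
        Real.logb 2 ((q : ℝ) ^ n) - n * (1 - 1 / (q : ℝ)) :=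
  stmt18_general q m n hq2 F hq
end
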